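/- Let G : (0,1) → ℝ be defined by G(λ) = N^{-1}·∫₀^λ s^{2/3}(1−s)^{-1/3}(2−s)^{-2} ds, where N = ∫₀^1 s^{2/3}(1−s)^{-1/3}(2−s)^{-2} ds. Define u(a₁, a₂, b₁) = G((a₁ − a₂)/(b₁ − a₂)) on the open set of triples of distinct reals with a₂ < a₁ < b₁. Then u satisfies the second-order PDE (3/2)·∂²_{a₁}u + D·∂_{a₁}u + (2/(a₂ − a₁))·∂_{a₂}u + (2/(b₁ − a₁))·∂_{b₁}u = 0, where D = −3·∂_{a₁} log R with R(a₁, a₂, b₁) = √(b₁ − a₁)·(a₁ − a₂)/(a₁ + a₂ − 2b₁). -/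

import Mathlib

/-!
Write `λ = (a₁ - a₂) / (b₁ - a₂)` and `f` for the integrand, so that `G' = N⁻¹ f` and
`f' / f = 2/(3λ) + 1/(3(1-λ)) + 2/(2-λ)` on `(0,1)`. By the chain rule each term of the PDE is
`N⁻¹ f(λ)` times a rational function of `a₁, a₂, b₁`, and the drift is
`D = 3/(2(b₁-a₁)) - 3/(a₁-a₂) + 3/(a₁+a₂-2b₁)`. The PDE thus reduces to the vanishing of a
single rational expression, which is checked by clearing denominators.
-/

open Real intervalIntegral

/-- The crossing-probability function `G` for `+/−/+/free` boundary conditions. -/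
noncomputable def crossG (lam : ℝ) : ℝ :=
  (∫ s in (0:ℝ)..1, s ^ ((2 : ℝ) / 3) * (1 - s) ^ (-(1 : ℝ) / 3) * (2 - s) ^ (-(2 : ℝ)))⁻¹
    * ∫ s in (0:ℝ)..lam, s ^ ((2 : ℝ) / 3) * (1 - s) ^ (-(1 : ℝ) / 3) * (2 - s) ^ (-(2 : ℝ))

/-- `u(a₁,a₂,b₁) = G((a₁−a₂)/(b₁−a₂))`. -/
noncomputable def crossU (a₁ a₂ b₁ : ℝ) : ℝ := crossG ((a₁ - a₂) / (b₁ - a₂))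

/-- The drift `D = −3 ∂_{a₁} log R` with `R = √(b₁−a₁)·(a₁−a₂)/(a₁+a₂−2b₁)`. -/
noncomputable def driftD (a₁ a₂ b₁ : ℝ) : ℝ :=
  -3 * deriv (fun a : ℝ =>
    Real.log (Real.sqrt (b₁ - a) * (a - a₂) / (a + a₂ - 2 * b₁))) a₁

noncomputable def crossDensity (s : ℝ) : ℝ :=
  s ^ ((2 : ℝ) / 3) * (1 - s) ^ (-(1 : ℝ) / 3) * (2 - s) ^ (-(2 : ℝ))

noncomputable def crossNormalization : ℝ := ∫ s in (0:ℝ)..1, crossDensity s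

noncomputable def crossDensityLogDeriv (s : ℝ) : ℝ := 2 / 3 / s + 1 / 3 / (1 - s) + 2 / (2 - s)

noncomputable def crossRatio (a₁ a₂ b₁ : ℝ) : ℝ := (a₁ - a₂) / (b₁ - a₂)

lemma crossRatio_pos {a₁ a₂ b₁ : ℝ} (h₁ : a₂ < a₁) (h₂ : a₂ < b₁) :
    0 < crossRatio a₁ a₂ b₁ :=
  div_pos (sub_pos.2 h₁) (sub_pos.2 h₂)

lemma crossRatio_lt_one {a₁ a₂ b₁ : ℝ} (h₁ : a₁ < b₁) (h₂ : a₂ < b₁) :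
    crossRatio a₁ a₂ b₁ < 1 :=
  (div_lt_one (sub_pos.2 h₂)).2 (by linarith)

lemma hasDerivAt_crossRatio_fst (a₁ a₂ b₁ : ℝ) :
    HasDerivAt (fun a => crossRatio a a₂ b₁) (1 / (b₁ - a₂)) a₁ := by
  simpa only [crossRatio, one_div] using ((hasDerivAt_id' a₁).sub_const a₂).div_const (b₁ - a₂)

lemma hasDerivAt_crossRatio_snd {a₁ a₂ b₁ : ℝ} (h : b₁ ≠ a₂) :
    HasDerivAt (fun x => crossRatio a₁ x b₁) ((a₁ - b₁) / (b₁ - a₂) ^ 2) a₂ := by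
  refine (((hasDerivAt_id' a₂).const_sub a₁).fun_div ((hasDerivAt_id' a₂).const_sub b₁)
    (sub_ne_zero.2 h)).congr_deriv ?_
  ring

lemma hasDerivAt_crossRatio_thd {a₁ a₂ b₁ : ℝ} (h : b₁ ≠ a₂) :
    HasDerivAt (fun y => crossRatio a₁ a₂ y) (-(a₁ - a₂) / (b₁ - a₂) ^ 2) b₁ := by
  refine ((hasDerivAt_const b₁ (a₁ - a₂)).fun_div ((hasDerivAt_id' b₁).sub_const a₂)
    (sub_ne_zero.2 h)).congr_deriv ?_
  ring

lemma continuousAt_crossDensity {x : ℝ} (hx : x < 1) : ContinuousAt crossDensity x := by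
  have h₁ : (1 : ℝ) - x ≠ 0 := by linarith
  have h₂ : (2 : ℝ) - x ≠ 0 := by linarith
  unfold crossDensity
  fun_prop (disch := first | exact Or.inl h₁ | exact Or.inl h₂ | norm_num)

lemma hasDerivAt_crossDensity {x : ℝ} (h₀ : 0 < x) (h₁ : x < 1) :
    HasDerivAt crossDensity (crossDensity x * crossDensityLogDeriv x) x := by
  have h₁' : 0 < 1 - x := by linarith
  have h₂' : 0 < 2 - x := by linarith
  refine ((((hasDerivAt_id' x).rpow_const (p := 2 / 3) (Or.inl h₀.ne')).fun_mul
    (((hasDerivAt_id' x).const_sub 1).rpow_const (p := -1 / 3) (Or.inl h₁'.ne'))).fun_mul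
    (((hasDerivAt_id' x).const_sub 2).rpow_const (p := -2) (Or.inl h₂'.ne'))).congr_deriv ?_
  simp only [crossDensity, crossDensityLogDeriv, Real.rpow_sub h₀, Real.rpow_sub h₁',
    Real.rpow_sub h₂', Real.rpow_one]
  field_simp

lemma hasDerivAt_crossG {x : ℝ} (hx : x < 1) :
    HasDerivAt crossG (crossNormalization⁻¹ * crossDensity x) x := by
  have hint : IntervalIntegrable crossDensity MeasureTheory.volume 0 x :=
    ContinuousOn.intervalIntegrable fun s hs =>
      (continuousAt_crossDensity (hs.2.trans_lt (max_lt one_pos hx))).continuousWithinAt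
  have hmeas : StronglyMeasurableAtFilter crossDensity (nhds x) :=
    ⟨Set.Iio 1, Iio_mem_nhds hx,
      (continuousOn_of_forall_continuousAt fun _ hy => continuousAt_crossDensity hy)
        |>.aestronglyMeasurable measurableSet_Iio⟩
  exact (integral_hasDerivAt_right hint hmeas (continuousAt_crossDensity hx)).const_mul _

lemma HasDerivAt.crossG {f : ℝ → ℝ} {f' x : ℝ} (hf : HasDerivAt f f' x) (hx : f x < 1) :
    HasDerivAt (fun y => crossG (f y)) (crossNormalization⁻¹ * crossDensity (f x) * f') x :=
  (hasDerivAt_crossG hx).comp x hf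

section partials

variable {a₁ a₂ b₁ : ℝ}

lemma hasDerivAt_crossU_fst (h₁ : a₁ < b₁) (h₂ : a₂ < b₁) :
    HasDerivAt (fun a => crossU a a₂ b₁)
      (crossNormalization⁻¹ * crossDensity (crossRatio a₁ a₂ b₁) * (1 / (b₁ - a₂))) a₁ :=
  (hasDerivAt_crossRatio_fst a₁ a₂ b₁).crossG (crossRatio_lt_one h₁ h₂)

lemma hasDerivAt_crossU_snd (h₁ : a₁ < b₁) (h₂ : a₂ < b₁) :
    HasDerivAt (fun x => crossU a₁ x b₁)
      (crossNormalization⁻¹ * crossDensity (crossRatio a₁ a₂ b₁) * ((a₁ - b₁) / (b₁ - a₂) ^ 2))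
      a₂ :=
  (hasDerivAt_crossRatio_snd h₂.ne').crossG (crossRatio_lt_one h₁ h₂)

lemma hasDerivAt_crossU_thd (h₁ : a₁ < b₁) (h₂ : a₂ < b₁) :
    HasDerivAt (fun y => crossU a₁ a₂ y)
      (crossNormalization⁻¹ * crossDensity (crossRatio a₁ a₂ b₁) * (-(a₁ - a₂) / (b₁ - a₂) ^ 2))
      b₁ :=
  (hasDerivAt_crossRatio_thd h₂.ne').crossG (crossRatio_lt_one h₁ h₂)

lemma hasDerivAt_deriv_crossU_fst (h₁ : a₂ < a₁) (h₂ : a₁ < b₁) :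
    HasDerivAt (deriv fun a => crossU a a₂ b₁)
      (crossNormalization⁻¹ * (crossDensity (crossRatio a₁ a₂ b₁) *
        crossDensityLogDeriv (crossRatio a₁ a₂ b₁) * (1 / (b₁ - a₂))) * (1 / (b₁ - a₂))) a₁ := by
  have hderiv : deriv (fun a => crossU a a₂ b₁) =ᶠ[nhds a₁]
      fun a => crossNormalization⁻¹ * crossDensity (crossRatio a a₂ b₁) * (1 / (b₁ - a₂)) := by
    filter_upwards [Iio_mem_nhds h₂] with a ha
    exact (hasDerivAt_crossU_fst ha (h₁.trans h₂)).deriv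
  refine HasDerivAt.congr_of_eventuallyEq ?_ hderiv
  exact (((hasDerivAt_crossDensity (crossRatio_pos h₁ (h₁.trans h₂))
    (crossRatio_lt_one h₂ (h₁.trans h₂))).comp a₁ (hasDerivAt_crossRatio_fst a₁ a₂ b₁)).const_mul
    _).mul_const _

/-- `R < 0` on the domain, so `Real.log R` is really `log |R|`; its derivative is still `R' / R`. -/
lemma driftD_eq (h₁ : a₁ ≠ a₂) (h₂ : a₁ < b₁) (h₃ : a₁ + a₂ - 2 * b₁ ≠ 0) :
    driftD a₁ a₂ b₁ = 3 / (2 * (b₁ - a₁)) - 3 / (a₁ - a₂) + 3 / (a₁ + a₂ - 2 * b₁) := by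
  have hq : 0 < b₁ - a₁ := sub_pos.2 h₂
  have hsqrt : HasDerivAt (fun a => √(b₁ - a)) (-1 / (2 * √(b₁ - a₁))) a₁ :=
    ((hasDerivAt_id' a₁).const_sub b₁).sqrt hq.ne'
  have hR := ((hsqrt.fun_mul ((hasDerivAt_id' a₁).sub_const a₂)).fun_div
    (((hasDerivAt_id' a₁).add_const a₂).sub_const (2 * b₁)) h₃).log
    (div_ne_zero (mul_ne_zero (Real.sqrt_pos.2 hq).ne' (sub_ne_zero.2 h₁)) h₃)
  rw [driftD, hR.deriv]
  have : √(b₁ - a₁) ≠ 0 := (Real.sqrt_pos.2 hq).ne'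
  have : a₁ - a₂ ≠ 0 := sub_ne_zero.2 h₁
  field_simp
  rw [Real.sq_sqrt hq.le]
  ring

lemma generator_identity_crossRatio (h₁ : a₂ < a₁) (h₂ : a₁ < b₁) :
    3 / 2 * (crossDensityLogDeriv (crossRatio a₁ a₂ b₁) * (1 / (b₁ - a₂)) * (1 / (b₁ - a₂)))
      + (3 / (2 * (b₁ - a₁)) - 3 / (a₁ - a₂) + 3 / (a₁ + a₂ - 2 * b₁)) * (1 / (b₁ - a₂))
      + 2 / (a₂ - a₁) * ((a₁ - b₁) / (b₁ - a₂) ^ 2)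
      + 2 / (b₁ - a₁) * (-(a₁ - a₂) / (b₁ - a₂) ^ 2) = 0 := by
  have hp : a₁ - a₂ ≠ 0 := by linarith
  have hq : b₁ - a₁ ≠ 0 := by linarith
  have hr : b₁ - a₂ ≠ 0 := by linarith
  have hm' : 2 * b₁ - a₁ - a₂ ≠ 0 := by linarith
  have h1 : 1 - crossRatio a₁ a₂ b₁ = (b₁ - a₁) / (b₁ - a₂) := by
    rw [crossRatio]; field_simp; ring
  have h2 : 2 - crossRatio a₁ a₂ b₁ = (2 * b₁ - a₁ - a₂) / (b₁ - a₂) := by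
    rw [crossRatio]; field_simp; ring
  rw [crossDensityLogDeriv, h1, h2, crossRatio, show a₂ - a₁ = -(a₁ - a₂) by ring,
    show a₁ + a₂ - 2 * b₁ = -(2 * b₁ - a₁ - a₂) by ring]
  field_simp
  ring

end partials

theorem crossing_probability_pde (a₁ a₂ b₁ : ℝ) (h₁ : a₂ < a₁) (h₂ : a₁ < b₁) :
    (3 / 2) * deriv (fun a : ℝ => deriv (fun a' : ℝ => crossU a' a₂ b₁) a) a₁
      + driftD a₁ a₂ b₁ * deriv (fun a : ℝ => crossU a a₂ b₁) a₁
      + (2 / (a₂ - a₁)) * deriv (fun x : ℝ => crossU a₁ x b₁) a₂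
      + (2 / (b₁ - a₁)) * deriv (fun y : ℝ => crossU a₁ a₂ y) b₁ = 0 := by
  have hb : a₂ < b₁ := h₁.trans h₂
  rw [(hasDerivAt_deriv_crossU_fst h₁ h₂).deriv, driftD_eq h₁.ne' h₂ (by linarith),
    (hasDerivAt_crossU_fst h₂ hb).deriv, (hasDerivAt_crossU_snd h₂ hb).deriv,
    (hasDerivAt_crossU_thd h₂ hb).deriv]
  linear_combination (crossNormalization⁻¹ * crossDensity (crossRatio a₁ a₂ b₁)) *
    generator_identity_crossRatio h₁ h₂
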